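/- arXiv:1909.00780 — 8 statements merged into one kernel-verified Lean document; each statement's English description precedes it below -/
import Mathlib

section
/- If f(z) = Σ_{n=0}^∞ a_n z^n is analytic in the unit disk D = {z ∈ ℂ : |z| < 1} with |f(z)| ≤ 1 for all z ∈ D, then for every r with 0 ≤ r ≤ 1/3 one has Σ_{n=0}^∞ |a_n| r^n ≤ 1. -/
/-!
The work is done by Wiener's inequality `‖aₙ‖ ≤ 1 - ‖a₀‖²` for `n ≥ 1`. Averaging `f` over
the rotations of the disk by `n`-th roots of unity keeps only the coefficients of index divisible
by `n`, so `g(w) = Σ a_{nk} wᵏ` is again bounded by `1` on the disk, with `g(0) = a₀` and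
`g'(0) = aₙ`.
The Schwarz–Pick bound `‖g'(0)‖ ≤ 1 - ‖g(0)‖²` follows from the Schwarz lemma applied to `g`
followed by the disk automorphism `u ↦ (u - g(0)) / (1 - conj g(0) u)`. With `A = ‖a₀‖` and
`r ≤ 1/3` this gives `Σ ‖aₙ‖ rⁿ ≤ A + (1 - A²) r / (1 - r) ≤ A + (1 - A²) / 2 ≤ 1`.
-/

open Metric Complex ComplexConjugate Finset Set
open scoped NNReal

noncomputable def blaschkeFactor (c u : ℂ) : ℂ := (u - c) / (1 - conj c * u)

theorem normSq_one_sub_conj_mul_sub_normSq_sub (c u : ℂ) :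
    normSq (1 - conj c * u) - normSq (u - c) = (1 - normSq c) * (1 - normSq u) := by
  simp only [normSq_apply, sub_re, sub_im, mul_re, mul_im, one_re, one_im, conj_re, conj_im]
  ring

theorem norm_sub_le_norm_one_sub_conj_mul {c u : ℂ} (hc : ‖c‖ ≤ 1) (hu : ‖u‖ ≤ 1) :
    ‖u - c‖ ≤ ‖1 - conj c * u‖ := by
  rw [← sq_le_sq₀ (norm_nonneg _) (norm_nonneg _), Complex.sq_norm, Complex.sq_norm]
  have hc' : normSq c ≤ 1 := by rw [← Complex.sq_norm]; exact pow_le_one₀ (norm_nonneg c) hc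
  have hu' : normSq u ≤ 1 := by rw [← Complex.sq_norm]; exact pow_le_one₀ (norm_nonneg u) hu
  nlinarith [normSq_one_sub_conj_mul_sub_normSq_sub c u]

-- `‖c‖ ≤ 1` suffices: where the denominator vanishes the quotient is `0`.
theorem norm_blaschkeFactor_le_one {c u : ℂ} (hc : ‖c‖ ≤ 1) (hu : ‖u‖ ≤ 1) :
    ‖blaschkeFactor c u‖ ≤ 1 := by
  rw [blaschkeFactor, norm_div]
  exact div_le_one_of_le₀ (norm_sub_le_norm_one_sub_conj_mul hc hu) (norm_nonneg _)

theorem blaschkeFactor_self (c : ℂ) : blaschkeFactor c c = 0 := by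
  simp [blaschkeFactor]

theorem one_sub_conj_mul_ne_zero {c u : ℂ} (hc : ‖c‖ < 1) (hu : ‖u‖ ≤ 1) :
    1 - conj c * u ≠ 0 := by
  refine sub_ne_zero.2 fun h => ?_
  have : ‖conj c * u‖ < 1 := by
    rw [norm_mul, RCLike.norm_conj]
    exact mul_lt_one_of_nonneg_of_lt_one_left (norm_nonneg c) hc hu
  simp [← h] at this

theorem differentiableOn_blaschkeFactor {c : ℂ} (hc : ‖c‖ < 1) :
    DifferentiableOn ℂ (blaschkeFactor c) (closedBall 0 1) :=
  ((differentiableOn_id.sub_const c).div ((differentiableOn_const 1).sub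
    ((differentiableOn_const _).mul differentiableOn_id))) fun _ hu =>
      one_sub_conj_mul_ne_zero hc (mem_closedBall_zero_iff.1 hu)

theorem hasDerivAt_blaschkeFactor_self {c : ℂ} (hc : ‖c‖ < 1) :
    HasDerivAt (blaschkeFactor c) ((1 - ‖c‖ ^ 2 : ℝ) : ℂ)⁻¹ c := by
  have hden := one_sub_conj_mul_ne_zero hc hc.le
  have h : HasDerivAt (fun u => (u - c) / (1 - conj c * u))
      ((1 * (1 - conj c * c) - (c - c) * -(conj c * 1)) / (1 - conj c * c) ^ 2) c :=
    ((hasDerivAt_id' c).sub_const c).div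
      (((hasDerivAt_id' c).const_mul (conj c)).const_sub 1) hden
  refine h.congr_deriv ?_
  rw [conj_mul'] at hden ⊢
  push_cast
  field_simp
  ring

theorem deriv_zero_eq_zero_of_norm_eq_one {h : ℂ → ℂ} (hd : DifferentiableOn ℂ h (ball 0 1))
    (hb : ∀ w ∈ ball (0 : ℂ) 1, ‖h w‖ ≤ 1) (h0 : ‖h 0‖ = 1) : deriv h 0 = 0 := by
  have hmem : (0 : ℂ) ∈ ball (0 : ℂ) 1 := mem_ball_self one_pos
  have hmax : IsMaxOn (norm ∘ h) (ball 0 1) 0 := fun w hw => (hb w hw).trans h0.ge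
  have hconst : h =ᶠ[nhds 0] fun _ => h 0 :=
    Filter.eventuallyEq_of_mem (isOpen_ball.mem_nhds hmem) <|
      eqOn_of_isPreconnected_of_isMaxOn_norm (convex_ball _ _).isPreconnected isOpen_ball
        hd hmem hmax
  rw [hconst.deriv_eq, deriv_const]

theorem norm_deriv_zero_le_one_sub_sq {h : ℂ → ℂ} (hd : DifferentiableOn ℂ h (ball 0 1))
    (hb : ∀ w ∈ ball (0 : ℂ) 1, ‖h w‖ ≤ 1) : ‖deriv h 0‖ ≤ 1 - ‖h 0‖ ^ 2 := by
  have hmem : (0 : ℂ) ∈ ball (0 : ℂ) 1 := mem_ball_self one_pos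
  rcases (hb 0 hmem).eq_or_lt with hc | hc
  · rw [deriv_zero_eq_zero_of_norm_eq_one hd hb hc, hc]
    norm_num
  have hmaps : MapsTo h (ball 0 1) (closedBall 0 1) := fun w hw =>
    mem_closedBall_zero_iff.2 (hb w hw)
  set g := blaschkeFactor (h 0) ∘ h
  have hgd : DifferentiableOn ℂ g (ball 0 1) := (differentiableOn_blaschkeFactor hc).comp hd hmaps
  have hg0 : g 0 = 0 := blaschkeFactor_self (h 0)
  have hgmaps : MapsTo g (ball 0 1) (closedBall (g 0) 1) := fun w hw => by
    rw [hg0, mem_closedBall_zero_iff]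
    exact norm_blaschkeFactor_le_one hc.le (hb w hw)
  have hschwarz : ‖deriv g 0‖ ≤ 1 := by
    simpa using Complex.norm_deriv_le_div_of_mapsTo_ball hgd hgmaps one_pos
  have hhd : HasDerivAt h (deriv h 0) 0 :=
    (hd.differentiableAt (isOpen_ball.mem_nhds hmem)).hasDerivAt
  have hgderiv : deriv g 0 = ((1 - ‖h 0‖ ^ 2 : ℝ) : ℂ)⁻¹ * deriv h 0 :=
    ((hasDerivAt_blaschkeFactor_self hc).comp 0 hhd).deriv
  have hpos : 0 < 1 - ‖h 0‖ ^ 2 := by nlinarith [norm_nonneg (h 0)]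
  rw [hgderiv, norm_mul, norm_inv, Complex.norm_real, Real.norm_of_nonneg hpos.le,
    inv_mul_le_iff₀ hpos, mul_one] at hschwarz
  exact hschwarz

theorem hasFPowerSeriesOnBall_ofScalars_of_hasSum {𝕜 : Type*} [RCLike 𝕜]
    {a : ℕ → 𝕜} {f : 𝕜 → 𝕜} {R : ℝ≥0} (hR : 0 < R)
    (hf : ∀ z ∈ ball (0 : 𝕜) R, HasSum (fun n => a n * z ^ n) (f z)) :
    HasFPowerSeriesOnBall f (FormalMultilinearSeries.ofScalars 𝕜 a) 0 R := by
  refine ⟨ENNReal.le_of_forall_nnreal_lt fun ρ hρ => ?_, by exact_mod_cast hR, fun {y} hy => ?_⟩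
  · obtain ⟨z, hz⟩ := exists_norm_eq 𝕜 ρ.coe_nonneg
    have hsum := hf z (by rw [mem_ball_zero_iff, hz]; exact_mod_cast hρ)
    refine FormalMultilinearSeries.le_radius_of_tendsto _ (l := 0) ?_
    simpa [FormalMultilinearSeries.ofScalars_norm, hz] using
      hsum.summable.tendsto_atTop_zero.norm
  · rw [Metric.eball_coe] at hy
    simpa [FormalMultilinearSeries.ofScalars_apply_eq, mul_comm] using hf y hy

theorem norm_coeff_one_le_one_sub_sq {a : ℕ → ℂ} {f : ℂ → ℂ}
    (hf : ∀ z ∈ ball (0 : ℂ) 1, HasSum (fun n => a n * z ^ n) (f z))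
    (hbd : ∀ z ∈ ball (0 : ℂ) 1, ‖f z‖ ≤ 1) : ‖a 1‖ ≤ 1 - ‖a 0‖ ^ 2 := by
  have hp := hasFPowerSeriesOnBall_ofScalars_of_hasSum (R := 1) one_pos
    (by simpa only [NNReal.coe_one] using hf)
  have hd : DifferentiableOn ℂ f (ball 0 1) := by
    simpa only [Metric.eball_coe, NNReal.coe_one] using hp.differentiableOn
  have h0 : f 0 = a 0 := by simpa using (hp.coeff_zero fun _ => 1).symm
  have h1 : deriv f 0 = a 1 := by simpa using hp.hasFPowerSeriesAt.deriv
  simpa [h0, h1] using norm_deriv_zero_le_one_sub_sq hd hbd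

theorem IsPrimitiveRoot.geom_sum_pow_eq_ite {K : Type*} [Field K] {ζ : K} {n : ℕ}
    (hζ : IsPrimitiveRoot ζ n) (m : ℕ) :
    ∑ j ∈ range n, (ζ ^ m) ^ j = if n ∣ m then (n : K) else 0 := by
  split_ifs with hdvd
  · simp [(hζ.pow_eq_one_iff_dvd m).2 hdvd]
  · rw [geom_sum_eq (mt (hζ.pow_eq_one_iff_dvd m).1 hdvd), ← pow_mul, mul_comm, pow_mul,
      hζ.pow_eq_one, one_pow, sub_self, zero_div]

theorem hasSum_ite_dvd_of_hasSum_rotations {K : Type*} [Field K] [TopologicalSpace K]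
    [IsTopologicalRing K] [CharZero K] {a : ℕ → K} {s : ℕ → K} {ζ z : K} {n : ℕ} (hn : n ≠ 0)
    (hζ : IsPrimitiveRoot ζ n) (hs : ∀ j, HasSum (fun m => a m * (ζ ^ j * z) ^ m) (s j)) :
    HasSum (fun m => if n ∣ m then a m * z ^ m else 0) ((n : K)⁻¹ * ∑ j ∈ range n, s j) := by
  refine ((hasSum_sum fun j _ => hs j).mul_left (n : K)⁻¹).congr_fun fun m => ?_
  have : ∑ j ∈ range n, a m * (ζ ^ j * z) ^ m = a m * z ^ m * ∑ j ∈ range n, (ζ ^ m) ^ j := by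
    rw [mul_sum]
    refine sum_congr rfl fun j _ => ?_
    ring
  rw [this, hζ.geom_sum_pow_eq_ite]
  split_ifs
  · field_simp
  · simp

theorem hasSum_ite_dvd_iff {α : Type*} [AddCommMonoid α] [TopologicalSpace α] {g : ℕ → α}
    {n : ℕ} (hn : n ≠ 0) {S : α} :
    HasSum (fun m => if n ∣ m then g m else 0) S ↔ HasSum (fun k => g (n * k)) S := by
  rw [← (mul_right_injective₀ hn).hasSum_iff]
  · simp [Function.comp_def]
  · rintro m hm
    rw [if_neg]
    rintro ⟨k, rfl⟩
    exact hm ⟨k, rfl⟩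

theorem exists_hasSum_coeff_mul_and_norm_le_one {a : ℕ → ℂ} {f : ℂ → ℂ}
    (hf : ∀ z ∈ ball (0 : ℂ) 1, HasSum (fun n => a n * z ^ n) (f z))
    (hbd : ∀ z ∈ ball (0 : ℂ) 1, ‖f z‖ ≤ 1) {n : ℕ} (hn : n ≠ 0) {w : ℂ}
    (hw : w ∈ ball (0 : ℂ) 1) :
    ∃ S, HasSum (fun k => a (n * k) * w ^ k) S ∧ ‖S‖ ≤ 1 := by
  obtain ⟨z, rfl⟩ := IsAlgClosed.exists_pow_nat_eq w (Nat.pos_of_ne_zero hn)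
  have hz : ‖z‖ < 1 := by
    rw [mem_ball_zero_iff, norm_pow] at hw
    exact (pow_lt_one_iff_of_nonneg (norm_nonneg z) hn).1 hw
  obtain ⟨ζ, hζ⟩ : ∃ ζ : ℂ, IsPrimitiveRoot ζ n := ⟨_, Complex.isPrimitiveRoot_exp n hn⟩
  have hrot : ∀ j, ζ ^ j * z ∈ ball (0 : ℂ) 1 := fun j => by
    rwa [mem_ball_zero_iff, norm_mul, norm_pow, hζ.norm'_eq_one hn, one_pow, one_mul]
  refine ⟨_, ((hasSum_ite_dvd_iff hn).1 (hasSum_ite_dvd_of_hasSum_rotations hn hζ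
    fun j => hf _ (hrot j))).congr_fun fun k => by rw [pow_mul], ?_⟩
  have hsum : ‖∑ j ∈ range n, f (ζ ^ j * z)‖ ≤ n := by
    simpa using norm_sum_le_of_le (range n) fun j _ => hbd _ (hrot j)
  rw [norm_mul, norm_inv, Complex.norm_natCast]
  exact inv_mul_le_one_of_le₀ hsum (Nat.cast_nonneg n)

theorem norm_coeff_le_one_sub_sq {a : ℕ → ℂ} {f : ℂ → ℂ}
    (hf : ∀ z ∈ ball (0 : ℂ) 1, HasSum (fun n => a n * z ^ n) (f z))
    (hbd : ∀ z ∈ ball (0 : ℂ) 1, ‖f z‖ ≤ 1) {n : ℕ} (hn : n ≠ 0) :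
    ‖a n‖ ≤ 1 - ‖a 0‖ ^ 2 := by
  choose! g hg hgle using fun w (hw : w ∈ ball (0 : ℂ) 1) =>
    exists_hasSum_coeff_mul_and_norm_le_one hf hbd hn hw
  simpa using norm_coeff_one_le_one_sub_sq hg hgle

theorem tsum_mul_pow_le {c : ℕ → ℝ} {B r : ℝ} (hc : ∀ n, 0 ≤ c n) (hB : ∀ n, n ≠ 0 → c n ≤ B)
    (hr0 : 0 ≤ r) (hr1 : r < 1) : ∑' n, c n * r ^ n ≤ c 0 + B * (r / (1 - r)) := by
  have hle : ∀ k, c (k + 1) * r ^ (k + 1) ≤ B * r * r ^ k := fun k =>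
    calc c (k + 1) * r ^ (k + 1) ≤ B * r ^ (k + 1) :=
          mul_le_mul_of_nonneg_right (hB _ k.succ_ne_zero) (pow_nonneg hr0 _)
      _ = B * r * r ^ k := by ring
  have hgeo : Summable fun k => B * r * r ^ k := (summable_geometric_of_lt_one hr0 hr1).mul_left _
  have htail : Summable fun k => c (k + 1) * r ^ (k + 1) :=
    hgeo.of_nonneg_of_le (fun k => mul_nonneg (hc _) (pow_nonneg hr0 _)) hle
  rw [((summable_nat_add_iff (f := fun n => c n * r ^ n) 1).1 htail).tsum_eq_zero_add,
    pow_zero, mul_one]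
  calc c 0 + ∑' k, c (k + 1) * r ^ (k + 1) ≤ c 0 + ∑' k, B * r * r ^ k :=
        add_le_add_right (htail.tsum_le_tsum hle hgeo) _
    _ = c 0 + B * (r / (1 - r)) := by
        rw [tsum_mul_left, tsum_geometric_of_lt_one hr0 hr1, div_eq_mul_inv, mul_assoc]

/-- **Classical Bohr inequality.** If `f(z) = Σ aₙ zⁿ` is analytic in the unit disk with
`|f(z)| ≤ 1` there, then `Σ |aₙ| rⁿ ≤ 1` for every `0 ≤ r ≤ 1/3`. -/
theorem bohr_inequality
    (f : ℂ → ℂ) (a : ℕ → ℂ)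
    (hf : ∀ z ∈ ball (0 : ℂ) 1, HasSum (fun n : ℕ => a n * z ^ n) (f z))
    (hbd : ∀ z ∈ ball (0 : ℂ) 1, ‖f z‖ ≤ 1)
    (r : ℝ) (hr0 : 0 ≤ r) (hr : r ≤ 1 / 3) :
    ∑' n : ℕ, ‖a n‖ * r ^ n ≤ 1 := by
  have hmem : (0 : ℂ) ∈ ball (0 : ℂ) 1 := mem_ball_self one_pos
  have ha0 : ‖a 0‖ ≤ 1 := by
    have h0 : f 0 = a 0 := by
      simpa using (hf 0 hmem).unique (hasSum_single 0 fun k hk => by simp [hk])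
    simpa [h0] using hbd 0 hmem
  have hr' : r / (1 - r) ≤ 1 / 2 := by
    rw [div_le_iff₀ (by linarith)]
    linarith
  calc ∑' n, ‖a n‖ * r ^ n ≤ ‖a 0‖ + (1 - ‖a 0‖ ^ 2) * (r / (1 - r)) :=
        tsum_mul_pow_le (fun _ => norm_nonneg _) (fun _ hn => norm_coeff_le_one_sub_sq hf hbd hn)
          hr0 (by linarith)
    _ ≤ ‖a 0‖ + (1 - ‖a 0‖ ^ 2) * (1 / 2) := by
        gcongr
        nlinarith [norm_nonneg (a 0)]
    _ ≤ 1 := by nlinarith [sq_nonneg (1 - ‖a 0‖)]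
end

section
/- For every p with 0 < p ≤ 2, the infimum over x ∈ [0,1) of the quantity (1 − x^p)/(2 − x² − x^p) equals p/(2+p). -/
/-!
Bernoulli's inequality for the exponent `p/2 ≤ 1`, applied to `x²`, gives
`p (1 - x²) ≤ 2 (1 - x^p)`, which is exactly `p/(2+p) ≤ (1 - x^p)/(2 - x² - x^p)` on `[0,1)`.
The bound is sharp at `x → 1⁻`: dividing numerator and denominator by `1 - x` turns the quotient
into `s/(1 + x + s)`, where the slope `s = (1 - x^p)/(1 - x)` tends to the derivative `p` of `x^p`
at `1`.
-/

open Filter Topology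

theorem mul_one_sub_sq_le_two_mul_one_sub_rpow {x p : ℝ} (hx : 0 ≤ x) (hp0 : 0 ≤ p)
    (hp2 : p ≤ 2) : p * (1 - x ^ 2) ≤ 2 * (1 - x ^ p) := by
  have hpow : (x ^ 2) ^ (p / 2) = x ^ p := by
    rw [← Real.rpow_natCast x 2, ← Real.rpow_mul hx]
    ring_nf
  have hbernoulli := rpow_one_add_le_one_add_mul_self (s := x ^ 2 - 1)
    (by nlinarith) (by linarith : 0 ≤ p / 2) (by linarith : p / 2 ≤ 1)
  rw [add_sub_cancel, hpow] at hbernoulli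
  linarith

theorem div_two_add_le_one_sub_rpow_div {x p : ℝ} (hx0 : 0 ≤ x) (hx1 : x < 1) (hp0 : 0 ≤ p)
    (hp2 : p ≤ 2) : p / (2 + p) ≤ (1 - x ^ p) / (2 - x ^ 2 - x ^ p) := by
  have hsq : 0 < 1 - x ^ 2 := by nlinarith
  have hpow : 0 ≤ 1 - x ^ p := sub_nonneg.2 (Real.rpow_le_one hx0 hx1.le hp0)
  have key := mul_one_sub_sq_le_two_mul_one_sub_rpow hx0 hp0 hp2
  rw [div_le_div_iff₀ (by linarith) (by linarith)]
  nlinarith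

theorem tendsto_one_sub_div_two_sub_sq_sub {f : ℝ → ℝ} {d : ℝ} (hf : HasDerivAt f d 1)
    (hf1 : f 1 = 1) (hd : 2 + d ≠ 0) :
    Tendsto (fun x => (1 - f x) / (2 - x ^ 2 - f x)) (𝓝[≠] 1) (𝓝 (d / (2 + d))) := by
  have hslope := hasDerivAt_iff_tendsto_slope.1 hf
  have hlin : Tendsto (fun x : ℝ => 1 + x) (𝓝[≠] 1) (𝓝 2) :=
    ((continuous_const_add 1).tendsto' 1 2 one_add_one_eq_two).mono_left nhdsWithin_le_nhds
  refine (hslope.div (hlin.add hslope) hd).congr' ?_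
  filter_upwards [self_mem_nhdsWithin] with x hx
  have hx : x - 1 ≠ 0 := sub_ne_zero.2 hx
  have hden : 1 + x + (f x - 1) / (x - 1) = (x ^ 2 + f x - 2) / (x - 1) := by
    field_simp
    ring
  rw [Pi.div_apply, slope_def_field, hf1, hden, div_div_div_cancel_right₀ hx, ← neg_div_neg_eq]
  ring_nf

/-- For every `0 < p ≤ 2`, the infimum over `x ∈ [0,1)` of `(1 − x^p)/(2 − x² − x^p)`
equals `p/(2+p)`. -/
theorem inf_phi_eq (p : ℝ) (hp0 : 0 < p) (hp2 : p ≤ 2) :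
    sInf ((fun x : ℝ => (1 - x ^ p) / (2 - x ^ 2 - x ^ p)) '' Set.Ico (0 : ℝ) 1) =
      p / (2 + p) := by
  have hderiv : HasDerivAt (fun x : ℝ => x ^ p) p 1 := by
    simpa using Real.hasDerivAt_rpow_const (p := p) (Or.inl one_ne_zero)
  have htend := (tendsto_one_sub_div_two_sub_sq_sub hderiv (Real.one_rpow p)
    (by linarith)).mono_left (nhdsLT_le_nhdsNE 1)
  refine IsGLB.csInf_eq ⟨?_, fun b hb => ge_of_tendsto htend ?_⟩ ⟨_, 0, ⟨le_rfl, one_pos⟩, rfl⟩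
  · rintro _ ⟨x, ⟨hx0, hx1⟩, rfl⟩
    exact div_two_add_le_one_sub_rpow_div hx0 hx1 hp0.le hp2
  · filter_upwards [Ioo_mem_nhdsLT one_pos] with x hx
    exact hb ⟨x, Set.Ioo_subset_Ico_self hx, rfl⟩
end

section
/- For every p with 0 < p ≤ 2, the function φ(x) = (1 − x^p)/(2 − x² − x^p) is monotonically decreasing on [0,1); equivalently, the function A(x) = −p − (2−p)x² + 2x^{2−p} satisfies A(x) ≤ 0 for all x ∈ [0,1]. -/
/-!
Writing `φ = N / D` with `N = 1 - x^p` and `D = 2 - x² - x^p`, the numerator of `φ'` factors as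
`N' D - N D' = x^(p-1) A(x)`. So `φ` decreases as soon as `A ≤ 0`, and `A ≤ 0` is the weighted
AM-GM inequality `1^(p/2) (x²)^((2-p)/2) ≤ p/2 + (2-p)/2 · x²`.
-/

open Set

namespace PowerRatio

noncomputable def phi (p x : ℝ) : ℝ := (1 - x ^ p) / (2 - x ^ 2 - x ^ p)

noncomputable def A (p x : ℝ) : ℝ := -p - (2 - p) * x ^ 2 + 2 * x ^ (2 - p)

variable {p x : ℝ}

theorem two_mul_rpow_two_sub_le (hp0 : 0 ≤ p) (hp2 : p ≤ 2) (hx : 0 ≤ x) :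
    2 * x ^ (2 - p) ≤ p + (2 - p) * x ^ 2 := by
  have amgm := Real.geom_mean_le_arith_mean2_weighted (p₁ := 1) (p₂ := x ^ 2)
    (by linarith : 0 ≤ p / 2) (by linarith : 0 ≤ (2 - p) / 2) zero_le_one (sq_nonneg x)
    (by ring)
  have hpow : (x ^ 2) ^ ((2 - p) / 2) = x ^ (2 - p) := by
    rw [← Real.rpow_natCast, ← Real.rpow_mul hx]
    congr 1
    ring
  rw [Real.one_rpow, one_mul, hpow] at amgm
  linarith

theorem A_nonpos (hp0 : 0 ≤ p) (hp2 : p ≤ 2) (hx : 0 ≤ x) : A p x ≤ 0 := by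
  have := two_mul_rpow_two_sub_le hp0 hp2 hx
  unfold A
  linarith

theorem two_sub_sq_sub_rpow_pos (hp : 0 ≤ p) (hx0 : 0 ≤ x) (hx1 : x < 1) :
    0 < 2 - x ^ 2 - x ^ p := by
  have : x ^ p ≤ 1 := Real.rpow_le_one hx0 hx1.le hp
  nlinarith

theorem phi_deriv_numerator_eq (hx : 0 < x) :
    -(p * x ^ (p - 1)) * (2 - x ^ 2 - x ^ p) - (1 - x ^ p) * (-(2 * x) - p * x ^ (p - 1)) =
      x ^ (p - 1) * A p x := by
  have hxp : x ^ p = x ^ (p - 1) * x := by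
    rw [← Real.rpow_add_one hx.ne']
    ring_nf
  have hx2p : x ^ (p - 1) * x ^ (2 - p) = x := by
    rw [← Real.rpow_add hx]
    norm_num
  unfold A
  linear_combination (-2 * x) * hxp - 2 * hx2p

theorem hasDerivAt_phi (hx : 0 < x) (hden : 2 - x ^ 2 - x ^ p ≠ 0) :
    HasDerivAt (phi p) (x ^ (p - 1) * A p x / (2 - x ^ 2 - x ^ p) ^ 2) x := by
  have hrpow : HasDerivAt (fun x : ℝ => x ^ p) (p * x ^ (p - 1)) x :=
    Real.hasDerivAt_rpow_const (.inl hx.ne')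
  have hnum : HasDerivAt (fun x : ℝ => 1 - x ^ p) (-(p * x ^ (p - 1))) x := by
    simpa using (hasDerivAt_const x 1).fun_sub hrpow
  have hden' : HasDerivAt (fun x : ℝ => 2 - x ^ 2 - x ^ p) (-(2 * x) - p * x ^ (p - 1)) x := by
    simpa using ((hasDerivAt_const x 2).fun_sub (hasDerivAt_pow 2 x)).fun_sub hrpow
  rw [← phi_deriv_numerator_eq hx]
  exact hnum.div hden' hden

theorem continuousOn_phi (hp : 0 ≤ p) : ContinuousOn (phi p) (Ico 0 1) := by
  have hrpow : Continuous fun x : ℝ => x ^ p := Real.continuous_rpow_const hp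
  exact ContinuousOn.div (by fun_prop) (by fun_prop)
    fun x hx => (two_sub_sq_sub_rpow_pos hp hx.1 hx.2).ne'

theorem antitoneOn_phi (hp0 : 0 ≤ p) (hp2 : p ≤ 2) : AntitoneOn (phi p) (Ico 0 1) := by
  refine antitoneOn_of_hasDerivWithinAt_nonpos (convex_Ico 0 1) (continuousOn_phi hp0)
    (f' := fun x => x ^ (p - 1) * A p x / (2 - x ^ 2 - x ^ p) ^ 2)
    (fun x hx => ?_) (fun x hx => ?_)
  all_goals rw [interior_Ico] at hx
  · exact (hasDerivAt_phi hx.1 (two_sub_sq_sub_rpow_pos hp0 hx.1.le hx.2).ne').hasDerivWithinAt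
  · exact div_nonpos_of_nonpos_of_nonneg
      (mul_nonpos_of_nonneg_of_nonpos (Real.rpow_nonneg hx.1.le _) (A_nonpos hp0 hp2 hx.1.le))
      (sq_nonneg _)

end PowerRatio

open PowerRatio in
/-- For every `0 < p ≤ 2`, the function `φ(x) = (1 − x^p)/(2 − x² − x^p)` is monotonically
decreasing on `[0,1)`; equivalently, `A(x) = −p − (2−p)x² + 2x^{2−p}` satisfies `A(x) ≤ 0`
for all `x ∈ [0,1]`. -/
theorem phi_antitone_and_A_nonpos (p : ℝ) (hp0 : 0 < p) (hp2 : p ≤ 2) :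
    AntitoneOn (fun x : ℝ => (1 - x ^ p) / (2 - x ^ 2 - x ^ p)) (Set.Ico (0 : ℝ) 1) ∧
      ∀ x ∈ Set.Icc (0 : ℝ) 1, -p - (2 - p) * x ^ 2 + 2 * x ^ (2 - p) ≤ 0 :=
  ⟨antitoneOn_phi hp0.le hp2, fun _ hx => A_nonpos hp0.le hp2 hx.1⟩
end

section
/- Let f(z) = Σ_{n=0}^∞ a_n z^n be analytic in the unit disk D with a_0 ∈ (0,1) real and Re f(z) < 1 for all z ∈ D. Then Σ_{n=0}^∞ |a_n| r^n + (1/(1+a_0) + r/(1−r)) · Σ_{n=1}^∞ |a_n|² r^{2n} ≤ 1 holds for all r with 0 ≤ r ≤ r_*, where r_* ≈ 0.24683 is the unique root in the interval (0,1) of the equation 3r³ − 5r² − 3r + 1 = 0. -/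
/-!
For `n ≥ 1` the coefficients obey the Carathéodory-type bound `‖a n‖ ≤ 2 (1 - a₀)`. We prove it by
a discrete Fourier argument: average `f (ρ ζ^k)` over the `N`-th roots of unity `ζ^k` against the
nonnegative weight `2 + 2 Re (l ζ^{-nk})`, where `l a n = ‖a n‖`. Since `Re f < 1` the real part of
the average is at most `2`, while by orthogonality of the characters it equals
`2 a₀ + ‖a n‖ ρ^n` up to coefficients of index `≥ N - n`; letting `N → ∞` and then `ρ → 1` gives
the bound. Both sums are then dominated by geometric series, and the resulting rational function of
`a₀` and `r` is at most `1` as soon as `3 r³ - 5 r² - 3 r + 1 ≥ 0`, i.e. for `r ≤ r_*`.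
-/

open Metric Complex Finset Filter
open scoped Real Topology ComplexConjugate

theorem Int.natCast_dvd_iff_eq_zero_of_abs_lt {N : ℕ} {x : ℤ} (hx : |x| < N) :
    (N : ℤ) ∣ x ↔ x = 0 :=
  ⟨fun h => Int.eq_zero_of_abs_lt_dvd h hx, fun h => h ▸ dvd_zero _⟩

theorem summable_norm_mul_pow_of_lt_norm {𝕜 : Type*} [NormedField 𝕜] {a : ℕ → 𝕜} {z : 𝕜}
    (hz : Summable fun n => a n * z ^ n) {ρ : ℝ} (hρ0 : 0 ≤ ρ) (hρ : ρ < ‖z‖) :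
    Summable fun n => ‖a n‖ * ρ ^ n := by
  have hz0 : 0 < ‖z‖ := hρ0.trans_lt hρ
  obtain ⟨C, hC⟩ := hz.tendsto_atTop_zero.norm.bddAbove_range
  refine .of_nonneg_of_le (fun n => by positivity) (fun n => ?_)
    ((summable_geometric_of_lt_one (by positivity) ((div_lt_one hz0).mpr hρ)).mul_left C)
  calc ‖a n‖ * ρ ^ n = ‖a n * z ^ n‖ * (ρ / ‖z‖) ^ n := by
        rw [norm_mul, norm_pow, div_pow]; field_simp
    _ ≤ C * (ρ / ‖z‖) ^ n := by gcongr; exact hC (Set.mem_range_self n)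

/-- With `b m = a m c ^ m` and `ζ` a primitive `N`-th root of unity, the `m`-th term of the
expansion of `N⁻¹ Σ_{k<N} (2 + l ζ^{-jk} + conj l ζ^{jk}) Σ_m a m (c ζ^k)^m`: only the indices
`m ≡ 0, j, -j (mod N)` survive the averaging. -/
noncomputable def aliasedCoeff (N : ℕ) (j : ℤ) (l : ℂ) (b : ℕ → ℂ) (m : ℕ) : ℂ :=
  2 * (if (N : ℤ) ∣ m then b m else 0) + l * (if (N : ℤ) ∣ m - j then b m else 0)
    + conj l * (if (N : ℤ) ∣ m + j then b m else 0)

namespace IsPrimitiveRoot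

theorem sum_pow_zpow {K : Type*} [Field K] {ζ : K} {N : ℕ} (hζ : IsPrimitiveRoot ζ N) (j : ℤ) :
    ∑ k ∈ range N, (ζ ^ k) ^ j = if (N : ℤ) ∣ j then (N : K) else 0 := by
  have hcomm : ∀ k : ℕ, (ζ ^ k) ^ j = (ζ ^ j) ^ k := fun k => by
    rw [← zpow_natCast, ← zpow_natCast, ← zpow_mul, ← zpow_mul, mul_comm]
  simp_rw [hcomm]
  split_ifs with hj
  · simp [(hζ.zpow_eq_one_iff_dvd j).mpr hj]
  · have hζj : (ζ ^ j) ^ N = 1 := by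
      rw [← zpow_natCast, ← zpow_mul, mul_comm, zpow_mul, zpow_natCast, hζ.pow_eq_one, one_zpow]
    rw [geom_sum_eq (mt (hζ.zpow_eq_one_iff_dvd j).mp hj), hζj, sub_self, zero_div]

variable {ζ : ℂ} {N : ℕ}

theorem norm_pow_zpow_eq_one (hζ : IsPrimitiveRoot ζ N) {k : ℕ} (hk : k ∈ range N) (j : ℤ) :
    ‖(ζ ^ k) ^ j‖ = 1 := by
  rw [norm_zpow, norm_pow, hζ.norm'_eq_one (by grind), one_pow, one_zpow]

theorem hasSum_ite_dvd_sub (hζ : IsPrimitiveRoot ζ N) (hN : N ≠ 0) {a F : ℕ → ℂ} {c : ℂ}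
    (hF : ∀ k, HasSum (fun m => a m * (c * ζ ^ k) ^ m) (F k)) (j : ℤ) :
    HasSum (fun m : ℕ => if (N : ℤ) ∣ m - j then a m * c ^ m else 0)
      ((N : ℂ)⁻¹ * ∑ k ∈ range N, (ζ ^ k) ^ (-j) * F k) := by
  have hζ0 : ζ ≠ 0 := hζ.ne_zero hN
  have hterm : ∀ m : ℕ, ∑ k ∈ range N, (ζ ^ k) ^ (-j) * (a m * (c * ζ ^ k) ^ m)
      = N * if (N : ℤ) ∣ m - j then a m * c ^ m else 0 := by
    intro m
    have hk : ∀ k : ℕ, (ζ ^ k) ^ (-j) * (a m * (c * ζ ^ k) ^ m)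
        = a m * c ^ m * (ζ ^ k) ^ ((m : ℤ) - j) := fun k => by
      rw [sub_eq_neg_add, zpow_add₀ (pow_ne_zero k hζ0), zpow_natCast, mul_pow]
      ring
    rw [sum_congr rfl fun k _ => hk k, ← mul_sum, hζ.sum_pow_zpow]
    split_ifs <;> ring
  have hsum := hasSum_sum fun k (_ : k ∈ range N) => (hF k).mul_left ((ζ ^ k) ^ (-j))
  simp_rw [hterm] at hsum
  simpa only [← mul_assoc, inv_mul_cancel₀ (Nat.cast_ne_zero.mpr hN : (N : ℂ) ≠ 0), one_mul]
    using hsum.mul_left (N : ℂ)⁻¹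

theorem re_inv_mul_sum_weight_mul_le (hζ : IsPrimitiveRoot ζ N) (hN : N ≠ 0) {j : ℤ}
    (hj : ¬ (N : ℤ) ∣ j) {l : ℂ} (hl : ‖l‖ = 1) {F : ℕ → ℂ} {M : ℝ} (hF : ∀ k, (F k).re ≤ M) :
    ((N : ℂ)⁻¹ * ∑ k ∈ range N, ((2 + 2 * (l * (ζ ^ k) ^ (-j)).re : ℝ) : ℂ) * F k).re ≤ 2 * M := by
  have hw : ∀ k ∈ range N, 0 ≤ 2 + 2 * (l * (ζ ^ k) ^ (-j)).re := fun k hk => by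
    have hu : ‖l * (ζ ^ k) ^ (-j)‖ = 1 := by rw [norm_mul, hl, hζ.norm_pow_zpow_eq_one hk, one_mul]
    linarith [neg_le_of_abs_le ((abs_re_le_norm _).trans hu.le)]
  have hsum : ∑ k ∈ range N, (2 + 2 * (l * (ζ ^ k) ^ (-j)).re) = 2 * N := by
    rw [sum_add_distrib, ← mul_sum, ← re_sum, ← mul_sum, hζ.sum_pow_zpow,
      if_neg (by simpa using hj)]
    simp [mul_comm]
  have hNpos : (0 : ℝ) < N := by positivity
  calc ((N : ℂ)⁻¹ * ∑ k ∈ range N, ((2 + 2 * (l * (ζ ^ k) ^ (-j)).re : ℝ) : ℂ) * F k).re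
      = (N : ℝ)⁻¹ * ∑ k ∈ range N, (2 + 2 * (l * (ζ ^ k) ^ (-j)).re) * (F k).re := by
        rw [show ((N : ℂ)⁻¹) = (((N : ℝ)⁻¹ : ℝ) : ℂ) by push_cast; rfl, re_ofReal_mul]
        simp only [re_sum, re_ofReal_mul]
    _ ≤ (N : ℝ)⁻¹ * ∑ k ∈ range N, (2 + 2 * (l * (ζ ^ k) ^ (-j)).re) * M := by
        refine mul_le_mul_of_nonneg_left (sum_le_sum fun k hk => ?_) (by positivity)
        exact mul_le_mul_of_nonneg_left (hF k) (hw k hk)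
    _ = 2 * M := by rw [← sum_mul, hsum]; field_simp

theorem conj_pow_zpow (hζ : IsPrimitiveRoot ζ N) {k : ℕ} (hk : k ∈ range N) (j : ℤ) :
    conj ((ζ ^ k) ^ j) = (ζ ^ k) ^ (-j) := by
  rw [← inv_eq_conj (hζ.norm_pow_zpow_eq_one hk j), zpow_neg]

theorem hasSum_aliasedCoeff (hζ : IsPrimitiveRoot ζ N) (hN : N ≠ 0) {a F : ℕ → ℂ} {c : ℂ}
    (hF : ∀ k, HasSum (fun m => a m * (c * ζ ^ k) ^ m) (F k)) (j : ℤ) (l : ℂ) :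
    HasSum (aliasedCoeff N j l fun m => a m * c ^ m)
      ((N : ℂ)⁻¹ * ∑ k ∈ range N, ((2 + 2 * (l * (ζ ^ k) ^ (-j)).re : ℝ) : ℂ) * F k) := by
  have h0 := hζ.hasSum_ite_dvd_sub hN hF 0
  have hnj := hζ.hasSum_ite_dvd_sub hN hF (-j)
  simp only [sub_zero, neg_zero, zpow_zero, one_mul, sub_neg_eq_add, neg_neg] at h0 hnj
  have hweight : ∀ k ∈ range N, (((2 + 2 * (l * (ζ ^ k) ^ (-j)).re : ℝ) : ℂ))
      = 2 + l * (ζ ^ k) ^ (-j) + conj l * (ζ ^ k) ^ j := fun k hk => by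
    have hconj : conj (l * (ζ ^ k) ^ (-j)) = conj l * (ζ ^ k) ^ j := by
      rw [map_mul, hζ.conj_pow_zpow hk, neg_neg]
    rw [add_assoc, ← hconj, add_conj]
    push_cast; ring
  have hval : (N : ℂ)⁻¹ * ∑ k ∈ range N, ((2 + 2 * (l * (ζ ^ k) ^ (-j)).re : ℝ) : ℂ) * F k
      = 2 * ((N : ℂ)⁻¹ * ∑ k ∈ range N, F k)
        + l * ((N : ℂ)⁻¹ * ∑ k ∈ range N, (ζ ^ k) ^ (-j) * F k)
        + conj l * ((N : ℂ)⁻¹ * ∑ k ∈ range N, (ζ ^ k) ^ j * F k) := by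
    rw [sum_congr rfl fun k hk => by rw [hweight k hk]]
    simp only [add_mul, sum_add_distrib, mul_add, mul_sum]
    ring_nf
  rw [hval]
  exact ((h0.mul_left 2).add ((hζ.hasSum_ite_dvd_sub hN hF j).mul_left l)).add
    (hnj.mul_left (conj l))

end IsPrimitiveRoot

theorem norm_aliasedCoeff_le {N : ℕ} {j : ℤ} {l : ℂ} (hl : ‖l‖ = 1) (b : ℕ → ℂ) (m : ℕ) :
    ‖aliasedCoeff N j l b m‖ ≤ 4 * ‖b m‖ := by
  have hite : ∀ p : Prop, [Decidable p] → ‖if p then b m else 0‖ ≤ ‖b m‖ :=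
    fun p _ => by split_ifs <;> simp
  refine norm_add₃_le.trans ?_
  simp only [norm_mul, norm_conj, hl, RCLike.norm_ofNat]
  linarith [hite ((N : ℤ) ∣ m), hite ((N : ℤ) ∣ m - j), hite ((N : ℤ) ∣ m + j)]

theorem sum_range_aliasedCoeff {N n : ℕ} (hn : n ≠ 0) (hnN : 2 * n < N) (l : ℂ) (b : ℕ → ℂ) :
    ∑ m ∈ range (N - n), aliasedCoeff N n l b m = 2 * b 0 + l * b n := by
  have hdvd : ∀ m < N - n, ∀ j : ℤ, |j| ≤ n → ((N : ℤ) ∣ m - j ↔ (m : ℤ) = j) :=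
    fun m hm j hj => by
      rw [abs_le] at hj
      rw [Int.natCast_dvd_iff_eq_zero_of_abs_lt (by rw [abs_lt]; omega), sub_eq_zero]
  have hdvd' : ∀ m < N - n, ((N : ℤ) ∣ m ↔ m = 0) ∧ ((N : ℤ) ∣ m - n ↔ m = n) ∧
      ¬ (N : ℤ) ∣ m + n := fun m hm => by
    refine ⟨?_, ?_, ?_⟩
    · simpa using hdvd m hm 0 (by simp)
    · simpa using hdvd m hm n (by simp)
    · simpa using (hdvd m hm (-n) (by simp)).not.mpr (by omega)
  rw [sum_eq_add_of_mem 0 n (by simp; omega) (by simp; omega) (Ne.symm hn) fun m hm hmn => ?_]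
  · obtain ⟨hn0, -, hn2⟩ := hdvd' n (by omega)
    simp [aliasedCoeff, hn0, hn2, hn]
  · obtain ⟨hm0, hm1, hm2⟩ := hdvd' m (mem_range.mp hm)
    simp [aliasedCoeff, hm0, hm1, hm2, hmn.1, hmn.2]

section CoefficientBound

variable {f : ℂ → ℂ} {a : ℕ → ℂ} {M ρ : ℝ}

theorem summable_norm_coeff_mul_pow
    (hf : ∀ z ∈ ball (0 : ℂ) 1, HasSum (fun m => a m * z ^ m) (f z)) (hρ0 : 0 ≤ ρ) (hρ1 : ρ < 1) :
    Summable fun m => ‖a m‖ * ρ ^ m := by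
  have hσ : ‖(((1 + ρ) / 2 : ℝ) : ℂ)‖ = (1 + ρ) / 2 := by
    rw [norm_real, Real.norm_of_nonneg (by positivity)]
  refine summable_norm_mul_pow_of_lt_norm (hf _ ?_).summable hρ0 (by rw [hσ]; linarith)
  rw [mem_ball_zero_iff, hσ]; linarith

theorem norm_coeff_mul_pow_le_add_tail
    (hf : ∀ z ∈ ball (0 : ℂ) 1, HasSum (fun m => a m * z ^ m) (f z))
    (hre : ∀ z ∈ ball (0 : ℂ) 1, (f z).re ≤ M) {n N : ℕ} (hn : n ≠ 0) (hnN : 2 * n < N)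
    (hρ0 : 0 ≤ ρ) (hρ1 : ρ < 1) :
    ‖a n‖ * ρ ^ n ≤ 2 * (M - (a 0).re) + 4 * ∑' m, ‖a (m + (N - n))‖ * ρ ^ (m + (N - n)) := by
  have hN : N ≠ 0 := by omega
  have hζ := isPrimitiveRoot_exp N hN
  set ζ := exp (2 * π * I / N)
  have hz : ∀ k : ℕ, (ρ : ℂ) * ζ ^ k ∈ ball (0 : ℂ) 1 := fun k => by
    simpa [norm_pow, hζ.norm'_eq_one hN, abs_of_nonneg hρ0] using hρ1
  obtain ⟨l, hl, hla⟩ := exists_norm_eq_mul_self (a n)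
  have hnN' : ¬ (N : ℤ) ∣ n := by
    rw [Int.natCast_dvd_iff_eq_zero_of_abs_lt (by rw [abs_lt]; omega)]; omega
  have hTre := hζ.re_inv_mul_sum_weight_mul_le hN hnN' hl fun k => hre _ (hz k)
  have hg := hζ.hasSum_aliasedCoeff hN (fun k => hf _ (hz k)) n l
  set T := (N : ℂ)⁻¹ * ∑ k ∈ range N, ((2 + 2 * (l * (ζ ^ k) ^ (-(n : ℤ))).re : ℝ) : ℂ)
    * f (ρ * ζ ^ k)
  have hs := (summable_nat_add_iff (N - n)).mpr (summable_norm_coeff_mul_pow hf hρ0 hρ1)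
  have htail := ((hasSum_nat_add_iff' (N - n)).mpr hg).norm_le_of_bounded (hs.hasSum.mul_left 4)
    fun m => (norm_aliasedCoeff_le hl _ _).trans_eq (by simp [abs_of_nonneg hρ0])
  rw [sum_range_aliasedCoeff hn hnN] at htail
  set head := 2 * (a 0 * (ρ : ℂ) ^ 0) + l * (a n * (ρ : ℂ) ^ n)
  have hre_head : head.re = 2 * (a 0).re + ‖a n‖ * ρ ^ n := by
    simp only [head, ← mul_assoc, ← hla]; simp [← ofReal_pow]
  linarith [neg_abs_le (T - head).re, abs_re_le_norm (T - head), sub_re T head]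

theorem norm_coeff_mul_pow_le
    (hf : ∀ z ∈ ball (0 : ℂ) 1, HasSum (fun m => a m * z ^ m) (f z))
    (hre : ∀ z ∈ ball (0 : ℂ) 1, (f z).re ≤ M) {n : ℕ} (hn : n ≠ 0) (hρ0 : 0 ≤ ρ) (hρ1 : ρ < 1) :
    ‖a n‖ * ρ ^ n ≤ 2 * (M - (a 0).re) := by
  have htail : Tendsto (fun N => 2 * (M - (a 0).re)
      + 4 * ∑' m, ‖a (m + (N - n))‖ * ρ ^ (m + (N - n))) atTop (𝓝 (2 * (M - (a 0).re) + 4 * 0)) :=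
    (((tendsto_sum_nat_add fun m => ‖a m‖ * ρ ^ m).comp (tendsto_sub_atTop_nat n)).const_mul
      4).const_add _
  rw [mul_zero, add_zero] at htail
  exact ge_of_tendsto htail ((eventually_gt_atTop (2 * n)).mono fun N hN =>
    norm_coeff_mul_pow_le_add_tail hf hre hn hN hρ0 hρ1)

theorem norm_coeff_le
    (hf : ∀ z ∈ ball (0 : ℂ) 1, HasSum (fun m => a m * z ^ m) (f z))
    (hre : ∀ z ∈ ball (0 : ℂ) 1, (f z).re ≤ M) {n : ℕ} (hn : n ≠ 0) :
    ‖a n‖ ≤ 2 * (M - (a 0).re) := by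
  have hlim : Tendsto (fun ρ : ℝ => ‖a n‖ * ρ ^ n) (𝓝[<] 1) (𝓝 (‖a n‖ * 1 ^ n)) :=
    ((continuous_const.mul (continuous_pow n)).tendsto 1).mono_left nhdsWithin_le_nhds
  rw [one_pow, mul_one] at hlim
  exact le_of_tendsto hlim (Filter.mem_of_superset (Ioo_mem_nhdsLT zero_lt_one)
    fun ρ hρ => norm_coeff_mul_pow_le hf hre hn hρ.1.le hρ.2)

end CoefficientBound

section GeometricMajorant

variable {d : ℕ → ℝ} {B r : ℝ}

theorem summable_mul_pow_of_le (hd0 : ∀ n, 0 ≤ d n) (hdB : ∀ n, d n ≤ B) (hr0 : 0 ≤ r)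
    (hr1 : r < 1) : Summable fun n => d n * r ^ n :=
  .of_nonneg_of_le (fun n => mul_nonneg (hd0 n) (pow_nonneg hr0 n))
    (fun n => mul_le_mul_of_nonneg_right (hdB n) (pow_nonneg hr0 n))
    ((summable_geometric_of_lt_one hr0 hr1).mul_left B)

theorem tsum_mul_pow_le_div (hd0 : ∀ n, 0 ≤ d n) (hdB : ∀ n, d n ≤ B) (hr0 : 0 ≤ r)
    (hr1 : r < 1) : ∑' n, d n * r ^ n ≤ B / (1 - r) :=
  hasSum_le (fun n => mul_le_mul_of_nonneg_right (hdB n) (pow_nonneg hr0 n))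
    (summable_mul_pow_of_le hd0 hdB hr0 hr1).hasSum
    ((hasSum_geometric_of_lt_one hr0 hr1).mul_left B)

variable {E : Type*} [SeminormedAddCommGroup E] {a : ℕ → E}

theorem tsum_norm_mul_pow_le (hB : ∀ n, ‖a (n + 1)‖ ≤ B) (hr0 : 0 ≤ r) (hr1 : r < 1) :
    ∑' n, ‖a n‖ * r ^ n ≤ ‖a 0‖ + r * (B / (1 - r)) := by
  have hshift : ∀ n, ‖a (n + 1)‖ * r ^ (n + 1) = r * (‖a (n + 1)‖ * r ^ n) := fun n => by ring
  have hs : Summable fun n => ‖a (n + 1)‖ * r ^ (n + 1) :=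
    ((summable_mul_pow_of_le (fun n => norm_nonneg (a (n + 1))) hB hr0 hr1).mul_left r).congr
      fun n => (hshift n).symm
  rw [((summable_nat_add_iff (f := fun n => ‖a n‖ * r ^ n) 1).mp hs).tsum_eq_zero_add,
    tsum_congr hshift, tsum_mul_left, pow_zero, mul_one]
  gcongr
  exact tsum_mul_pow_le_div (fun n => norm_nonneg _) hB hr0 hr1

theorem tsum_sq_norm_mul_pow_le (hB : ∀ n, ‖a (n + 1)‖ ≤ B) (hr0 : 0 ≤ r) (hr1 : r < 1) :
    ∑' n, ‖a (n + 1)‖ ^ 2 * r ^ (2 * (n + 1)) ≤ r ^ 2 * (B ^ 2 / (1 - r ^ 2)) := by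
  have hsplit : ∀ n, ‖a (n + 1)‖ ^ 2 * r ^ (2 * (n + 1))
      = r ^ 2 * (‖a (n + 1)‖ ^ 2 * (r ^ 2) ^ n) := fun n => by ring
  rw [tsum_congr hsplit, tsum_mul_left]
  gcongr
  exact tsum_mul_pow_le_div (fun n => sq_nonneg _)
    (fun n => pow_le_pow_left₀ (norm_nonneg _) (hB n) 2) (sq_nonneg r) (by nlinarith)

end GeometricMajorant

theorem cubic_nonneg_of_le_root {r s : ℝ} (hr0 : 0 ≤ r) (hrs : r ≤ s) (hs1 : s < 1)
    (hroot : 3 * s ^ 3 - 5 * s ^ 2 - 3 * s + 1 = 0) : 0 ≤ 3 * r ^ 3 - 5 * r ^ 2 - 3 * r + 1 := by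
  -- `p r - p s = (s - r) (5 (r + s) + 3 - 3 (r² + r s + s²))`, and the second factor is positive
  -- on `[0, 1)`.
  have hsr := sub_nonneg.mpr hrs
  nlinarith [mul_nonneg hsr hr0, mul_nonneg hsr hsr, mul_nonneg (mul_nonneg hsr hr0) hr0]

theorem refined_bohr_majorant_le_one {a₀ r : ℝ} (ha0 : 0 ≤ a₀) (ha1 : a₀ ≤ 1) (hr0 : 0 ≤ r)
    (hr1 : r < 1) (hp : 0 ≤ 3 * r ^ 3 - 5 * r ^ 2 - 3 * r + 1) :
    a₀ + r * (2 * (1 - a₀) / (1 - r))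
      + (1 / (1 + a₀) + r / (1 - r)) * (r ^ 2 * ((2 * (1 - a₀)) ^ 2 / (1 - r ^ 2))) ≤ 1 := by
  have h1r : 0 < 1 - r := by linarith
  have hidentity : 1 - (a₀ + r * (2 * (1 - a₀) / (1 - r))
      + (1 / (1 + a₀) + r / (1 - r)) * (r ^ 2 * ((2 * (1 - a₀)) ^ 2 / (1 - r ^ 2))))
      = (1 - a₀) * ((3 * r ^ 3 - 5 * r ^ 2 - 3 * r + 1) + a₀ * (1 - r) ^ 3 + 4 * a₀ ^ 2 * r ^ 3)
        / ((1 - r) ^ 2 * (1 + r) * (1 + a₀)) := by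
    rw [show 1 - r ^ 2 = (1 - r) * (1 + r) by ring]
    field_simp
    ring
  rw [← sub_nonneg, hidentity]
  exact div_nonneg (mul_nonneg (by linarith) (by positivity)) (by positivity)

/-- **Theorem 1, first part.** If `f(z) = Σ aₙ zⁿ` is analytic in the unit disk with
`a₀ ∈ (0,1)` real and `Re f(z) < 1` there, then
`Σ |aₙ| rⁿ + (1/(1+a₀) + r/(1−r)) Σ_{n≥1} |aₙ|² r^{2n} ≤ 1` for all `0 ≤ r ≤ r_*`,
where `r_* ≈ 0.24683` is the unique root of `3r³ − 5r² − 3r + 1 = 0` in `(0,1)`. -/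
theorem refined_bohr_re_lt_one
    (f : ℂ → ℂ) (a : ℕ → ℂ) (a₀ : ℝ)
    (hf : ∀ z ∈ ball (0 : ℂ) 1, HasSum (fun n : ℕ => a n * z ^ n) (f z))
    (hre : ∀ z ∈ ball (0 : ℂ) 1, (f z).re < 1)
    (ha₀ : a 0 = (a₀ : ℂ)) (h0 : 0 < a₀) (h1 : a₀ < 1)
    (rs : ℝ) (hrs : rs ∈ Set.Ioo (0 : ℝ) 1)
    (hroot : 3 * rs ^ 3 - 5 * rs ^ 2 - 3 * rs + 1 = 0)
    (r : ℝ) (hr0 : 0 ≤ r) (hr : r ≤ rs) :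
    (∑' n : ℕ, ‖a n‖ * r ^ n) +
      (1 / (1 + a₀) + r / (1 - r)) *
        ∑' n : ℕ, ‖a (n + 1)‖ ^ 2 * r ^ (2 * (n + 1)) ≤ 1 := by
  have hr1 : r < 1 := hr.trans_lt hrs.2
  have hB : ∀ n, ‖a (n + 1)‖ ≤ 2 * (1 - a₀) := fun n => by
    simpa [ha₀] using norm_coeff_le hf (fun z hz => (hre z hz).le) n.succ_ne_zero
  have hfirst := tsum_norm_mul_pow_le hB hr0 hr1
  rw [ha₀, norm_real, Real.norm_of_nonneg h0.le] at hfirst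
  have hsecond := tsum_sq_norm_mul_pow_le hB hr0 hr1
  have hmajorant := refined_bohr_majorant_le_one h0.le h1.le hr0 hr1
    (cubic_nonneg_of_le_root hr0 hr hrs.2 hroot)
  have hweight : 0 ≤ 1 / (1 + a₀) + r / (1 - r) := by
    have : 0 < 1 - r := by linarith
    positivity
  linarith [mul_le_mul_of_nonneg_left hsecond hweight]
end

section
/- Define Φ(λ,r) = 4r³λ² − (7r³ + 3r² − 3r + 1)λ + 6r³ − 2r² − 6r + 2 and let r_* be the unique root in (0,1) of 3r³ − 5r² − 3r + 1 = 0. Then Φ(λ,r) ≥ 0 for every λ ∈ (0,1] and every r ∈ [0, r_*]. -/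
/-!
`Φ(λ, r) = g(r) + (1 - λ)(1 - r)³ + 4r³(1 - λ)²` with `g(r) = Φ(1, r) = 3r³ - 5r² - 3r + 1`.
The last two terms are nonnegative for `λ, r ≤ 1`, and `g` is decreasing on `[0, 1]`, so
`g(r) ≥ g(r_*) = 0` for `r ≤ r_*`.
-/

open Set

def phiCubic (r : ℝ) : ℝ := 3 * r ^ 3 - 5 * r ^ 2 - 3 * r + 1

theorem phiCubic_sub_phiCubic (r s : ℝ) :
    phiCubic r - phiCubic s = (r - s) * (3 * (r ^ 2 + r * s + s ^ 2) - 5 * (r + s) - 3) := by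
  unfold phiCubic
  ring

theorem phiCubic_antitoneOn : AntitoneOn phiCubic (Icc 0 1) := by
  rintro r ⟨hr0, hr1⟩ s ⟨hs0, hs1⟩ hrs
  have hfactor : 3 * (r ^ 2 + r * s + s ^ 2) - 5 * (r + s) - 3 ≤ 0 := by
    nlinarith [mul_le_mul hr1 hs1 hs0 zero_le_one, mul_le_of_le_one_left hr0 hr1,
      mul_le_of_le_one_left hs0 hs1]
  have := phiCubic_sub_phiCubic s r
  nlinarith

theorem phi_eq_phiCubic_add (lam r : ℝ) :
    4 * r ^ 3 * lam ^ 2 - (7 * r ^ 3 + 3 * r ^ 2 - 3 * r + 1) * lam +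
        6 * r ^ 3 - 2 * r ^ 2 - 6 * r + 2 =
      phiCubic r + (1 - lam) * (1 - r) ^ 3 + 4 * r ^ 3 * (1 - lam) ^ 2 := by
  unfold phiCubic
  ring

/-- With `Φ(λ,r) = 4r³λ² − (7r³ + 3r² − 3r + 1)λ + 6r³ − 2r² − 6r + 2` and `r_*` the unique
root of `3r³ − 5r² − 3r + 1 = 0` in `(0,1)`, one has `Φ(λ,r) ≥ 0` for every `λ ∈ (0,1]` and
`r ∈ [0, r_*]`. -/
theorem Phi_nonneg
    (rs : ℝ) (hrs : rs ∈ Set.Ioo (0 : ℝ) 1)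
    (hroot : 3 * rs ^ 3 - 5 * rs ^ 2 - 3 * rs + 1 = 0)
    (lam : ℝ) (hlam : lam ∈ Set.Ioc (0 : ℝ) 1)
    (r : ℝ) (hr : r ∈ Set.Icc (0 : ℝ) rs) :
    0 ≤ 4 * r ^ 3 * lam ^ 2 - (7 * r ^ 3 + 3 * r ^ 2 - 3 * r + 1) * lam +
      6 * r ^ 3 - 2 * r ^ 2 - 6 * r + 2 := by
  obtain ⟨hr0, hr_rs⟩ := hr
  have hr1 : r ≤ 1 := hr_rs.trans hrs.2.le
  have hcubic : 0 ≤ phiCubic r :=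
    hroot ▸ phiCubic_antitoneOn ⟨hr0, hr1⟩ ⟨hrs.1.le, hrs.2.le⟩ hr_rs
  have hlam1 : 0 ≤ 1 - lam := sub_nonneg.2 hlam.2
  rw [phi_eq_phiCubic_add]
  exact add_nonneg (add_nonneg hcubic (mul_nonneg hlam1 (pow_nonneg (sub_nonneg.2 hr1) 3)))
    (mul_nonneg (mul_nonneg zero_le_four (pow_nonneg hr0 3)) (sq_nonneg _))
end

section
/- Define Φ(λ,r) = 4r³λ² − (7r³ + 3r² − 3r + 1)λ + 6r³ − 2r² − 6r + 2, whose partial derivative with respect to r is ∂Φ/∂r = 12r²λ² − (21r² + 6r − 3)λ + 18r² − 4r − 6. Then ∂Φ/∂r(λ,r) < 0 for every λ ∈ (0,1) and every r ∈ [r_*, 1/3], where r_* is the unique root in (0,1) of 3r³ − 5r² − 3r + 1 = 0. -/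
/-!
As a function of `λ`, `∂Φ/∂r` is a convex quadratic, so on `[0, 1]` it lies below the chord
through its endpoint values `18r² − 4r − 6` (at `λ = 0`) and `9r² − 10r − 3` (at `λ = 1`).
Both are negative for `0 < r ≤ 1/3`.
-/

theorem hasDerivAt_cubic (a b c d x : ℝ) :
    HasDerivAt (fun t : ℝ => a * t ^ 3 + b * t ^ 2 + c * t + d)
      (3 * a * x ^ 2 + 2 * b * x + c) x := by
  have h3 : HasDerivAt (fun t : ℝ => t ^ 3) (3 * x ^ 2) x := by
    simpa using hasDerivAt_pow 3 x
  have h2 : HasDerivAt (fun t : ℝ => t ^ 2) (2 * x) x := by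
    simpa using hasDerivAt_pow 2 x
  exact ((((h3.const_mul a).add (h2.const_mul b)).add
    ((hasDerivAt_id' x).const_mul c)).add_const d).congr_deriv (by ring)

theorem quadratic_neg_of_neg_at_zero_of_neg_at_one {a b c x : ℝ} (ha : 0 ≤ a)
    (hx₀ : 0 ≤ x) (hx₁ : x ≤ 1) (h₀ : c < 0) (h₁ : a + b + c < 0) :
    a * x ^ 2 + b * x + c < 0 := by
  have below_chord : a * x ^ 2 + b * x + c ≤ (1 - x) * c + x * (a + b + c) := by
    nlinarith [mul_nonneg (mul_nonneg ha hx₀) (sub_nonneg.mpr hx₁)]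
  rcases le_total c (a + b + c) with h | h
  · nlinarith [mul_nonneg (sub_nonneg.mpr hx₁) (sub_nonneg.mpr h)]
  · nlinarith [mul_nonneg hx₀ (sub_nonneg.mpr h)]

theorem Phi_partial_r_neg_general
    (rs : ℝ) (hrs : rs ∈ Set.Ioo (0 : ℝ) 1)
    (lam : ℝ) (hlam : lam ∈ Set.Ioo (0 : ℝ) 1)
    (r : ℝ) (hr : r ∈ Set.Icc rs (1 / 3 : ℝ)) :
    HasDerivAt
      (fun t : ℝ => 4 * t ^ 3 * lam ^ 2 - (7 * t ^ 3 + 3 * t ^ 2 - 3 * t + 1) * lam +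
        6 * t ^ 3 - 2 * t ^ 2 - 6 * t + 2)
      (12 * r ^ 2 * lam ^ 2 - (21 * r ^ 2 + 6 * r - 3) * lam + 18 * r ^ 2 - 4 * r - 6) r ∧
    12 * r ^ 2 * lam ^ 2 - (21 * r ^ 2 + 6 * r - 3) * lam + 18 * r ^ 2 - 4 * r - 6 < 0 := by
  constructor
  · convert hasDerivAt_cubic (4 * lam ^ 2 - 7 * lam + 6) (-3 * lam - 2) (3 * lam - 6) (2 - lam) r
      using 1
    · ext t
      ring
    · ring
  · have hr₀ : 0 < r := hrs.1.trans_le hr.1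
    have hr₁ : r ≤ 1 / 3 := hr.2
    have at_zero : 18 * r ^ 2 - 4 * r - 6 < 0 := by nlinarith
    have at_one : 12 * r ^ 2 - (21 * r ^ 2 + 6 * r - 3) + (18 * r ^ 2 - 4 * r - 6) < 0 := by
      nlinarith
    have hquad := quadratic_neg_of_neg_at_zero_of_neg_at_one (by positivity) hlam.1.le hlam.2.le
      at_zero at_one
    linarith

/-- With `Φ(λ,r) = 4r³λ² − (7r³ + 3r² − 3r + 1)λ + 6r³ − 2r² − 6r + 2`, the partial derivative
of `Φ` with respect to `r` equals `12r²λ² − (21r² + 6r − 3)λ + 18r² − 4r − 6`, and this is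
negative for every `λ ∈ (0,1)` and `r ∈ [r_*, 1/3]`, where `r_*` is the unique root of
`3r³ − 5r² − 3r + 1 = 0` in `(0,1)`. -/
theorem Phi_partial_r_neg
    (rs : ℝ) (hrs : rs ∈ Set.Ioo (0 : ℝ) 1)
    (hroot : 3 * rs ^ 3 - 5 * rs ^ 2 - 3 * rs + 1 = 0)
    (lam : ℝ) (hlam : lam ∈ Set.Ioo (0 : ℝ) 1)
    (r : ℝ) (hr : r ∈ Set.Icc rs (1 / 3 : ℝ)) :
    HasDerivAt
      (fun t : ℝ => 4 * t ^ 3 * lam ^ 2 - (7 * t ^ 3 + 3 * t ^ 2 - 3 * t + 1) * lam +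
        6 * t ^ 3 - 2 * t ^ 2 - 6 * t + 2)
      (12 * r ^ 2 * lam ^ 2 - (21 * r ^ 2 + 6 * r - 3) * lam + 18 * r ^ 2 - 4 * r - 6) r ∧
    12 * r ^ 2 * lam ^ 2 - (21 * r ^ 2 + 6 * r - 3) * lam + 18 * r ^ 2 - 4 * r - 6 < 0 :=
  Phi_partial_r_neg_general rs hrs lam hlam r hr
end

section
/- Define Ψ(λ,r) = 16λ²r³(1 + r²) − λ[(1 − 6r + r²)(1 − r)²(1 + r)³ + 16r²(1 + r)(1 + r²)] + 2(1 − 6r + r²)(1 − r)²(1 + r)³, and let r_g be the unique root in (0,1) of (1 − 6r + r²)(1 − r)²(1 + r)³ − 16r²(1 + r²) = 0. Then Ψ(λ,r) ≥ 0 for every λ ∈ (0,1] and every r ∈ [0, r_g]. -/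
/-!
Writing `f(r) = (1−6r+r²)(1−r)²(1+r)³ − 16r²(1+r²)` for the polynomial defining `r_g`, one has
`Ψ(λ,r) = (2−λ) f(r) + (1−λ)(2−λr) · 16r²(1+r²)`. The second term is nonnegative for `λ ≤ 1` and
`r ∈ [0,1]`, and `f` is decreasing on `[0,1]` (its divided difference is positive there), so
`f(r) ≥ f(r_g) = 0` for `r ≤ r_g`.
-/

/-- The polynomial `f` whose root in `(0,1)` is `r_g`. -/
def critPoly (r : ℝ) : ℝ :=
  (1 - 6 * r + r ^ 2) * (1 - r) ^ 2 * (1 + r) ^ 3 - 16 * r ^ 2 * (1 + r ^ 2)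

def critSlope (a b : ℝ) : ℝ :=
  5 + 23 * (a + b) - 11 * (a ^ 2 + a * b + b ^ 2)
    + 5 * (a ^ 3 + a ^ 2 * b + a * b ^ 2 + b ^ 3)
    + 7 * (a ^ 4 + a ^ 3 * b + a ^ 2 * b ^ 2 + a * b ^ 3 + b ^ 4)
    + 5 * (a ^ 5 + a ^ 4 * b + a ^ 3 * b ^ 2 + a ^ 2 * b ^ 3 + a * b ^ 4 + b ^ 5)
    - (a ^ 6 + a ^ 5 * b + a ^ 4 * b ^ 2 + a ^ 3 * b ^ 3 + a ^ 2 * b ^ 4 + a * b ^ 5 + b ^ 6)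

lemma critPoly_sub (a b : ℝ) : critPoly a - critPoly b = (b - a) * critSlope a b := by
  unfold critPoly critSlope
  ring

lemma critSlope_nonneg {a b : ℝ} (ha₀ : 0 ≤ a) (ha₁ : a ≤ 1) (hb₀ : 0 ≤ b) (hb₁ : b ≤ 1) :
    0 ≤ critSlope a b := by
  have h₅ : 0 ≤ a ^ 5 + a ^ 4 * b + a ^ 3 * b ^ 2 + a ^ 2 * b ^ 3 + a * b ^ 4 + b ^ 5 := by
    positivity
  -- the degree-6 sum is `a` times the degree-5 sum, plus `b⁶`
  have h₆ : a ^ 6 + a ^ 5 * b + a ^ 4 * b ^ 2 + a ^ 3 * b ^ 3 + a ^ 2 * b ^ 4 + a * b ^ 5 + b ^ 6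
      ≤ (a ^ 5 + a ^ 4 * b + a ^ 3 * b ^ 2 + a ^ 2 * b ^ 3 + a * b ^ 4 + b ^ 5) + 1 := by
    nlinarith [mul_le_of_le_one_left h₅ ha₁, pow_le_one₀ hb₀ hb₁ (n := 6)]
  have h₂ : a ^ 2 + a * b + b ^ 2 ≤ 2 * (a + b) := by
    nlinarith [mul_le_of_le_one_left ha₀ hb₁]
  have h₃ : 0 ≤ a ^ 3 + a ^ 2 * b + a * b ^ 2 + b ^ 3 := by positivity
  have h₄ : 0 ≤ a ^ 4 + a ^ 3 * b + a ^ 2 * b ^ 2 + a * b ^ 3 + b ^ 4 := by positivity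
  unfold critSlope
  linarith

lemma critPoly_antitoneOn : AntitoneOn critPoly (Set.Icc 0 1) := by
  intro a ha b hb hab
  have := mul_nonneg (sub_nonneg.2 hab) (critSlope_nonneg ha.1 ha.2 hb.1 hb.2)
  linarith [critPoly_sub a b]

def Psi (lam r : ℝ) : ℝ :=
  16 * lam ^ 2 * r ^ 3 * (1 + r ^ 2) -
    lam * ((1 - 6 * r + r ^ 2) * (1 - r) ^ 2 * (1 + r) ^ 3 +
      16 * r ^ 2 * (1 + r) * (1 + r ^ 2)) +
    2 * (1 - 6 * r + r ^ 2) * (1 - r) ^ 2 * (1 + r) ^ 3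

lemma Psi_eq (lam r : ℝ) :
    Psi lam r = (2 - lam) * critPoly r + (1 - lam) * (2 - lam * r) * (16 * r ^ 2 * (1 + r ^ 2)) := by
  unfold Psi critPoly
  ring

lemma Psi_nonneg_of_critPoly_nonneg {lam r : ℝ} (hlam : lam ≤ 1) (hr₀ : 0 ≤ r) (hr₁ : r ≤ 1)
    (hf : 0 ≤ critPoly r) : 0 ≤ Psi lam r := by
  have hlam_r : lam * r ≤ 1 := by nlinarith
  rw [Psi_eq]
  exact add_nonneg (mul_nonneg (by linarith) hf)
    (mul_nonneg (mul_nonneg (by linarith) (by linarith)) (by positivity))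

/-- With `Ψ(λ,r) = 16λ²r³(1+r²) − λ[(1−6r+r²)(1−r)²(1+r)³ + 16r²(1+r)(1+r²)]
+ 2(1−6r+r²)(1−r)²(1+r)³` and `r_g` the unique root of
`(1−6r+r²)(1−r)²(1+r)³ − 16r²(1+r²) = 0` in `(0,1)`, one has `Ψ(λ,r) ≥ 0` for every
`λ ∈ (0,1]` and `r ∈ [0, r_g]`. -/
theorem Psi_nonneg
    (rg : ℝ) (hrg : rg ∈ Set.Ioo (0 : ℝ) 1)
    (hroot : (1 - 6 * rg + rg ^ 2) * (1 - rg) ^ 2 * (1 + rg) ^ 3 -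
      16 * rg ^ 2 * (1 + rg ^ 2) = 0)
    (lam : ℝ) (hlam : lam ∈ Set.Ioc (0 : ℝ) 1)
    (r : ℝ) (hr : r ∈ Set.Icc (0 : ℝ) rg) :
    0 ≤ 16 * lam ^ 2 * r ^ 3 * (1 + r ^ 2) -
      lam * ((1 - 6 * r + r ^ 2) * (1 - r) ^ 2 * (1 + r) ^ 3 +
        16 * r ^ 2 * (1 + r) * (1 + r ^ 2)) +
      2 * (1 - 6 * r + r ^ 2) * (1 - r) ^ 2 * (1 + r) ^ 3 := by
  have hr₁ : r ≤ 1 := hr.2.trans hrg.2.le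
  have hf : 0 ≤ critPoly r := by
    have := critPoly_antitoneOn ⟨hr.1, hr₁⟩ ⟨hrg.1.le, hrg.2.le⟩ hr.2
    rwa [show critPoly rg = 0 from hroot] at this
  exact Psi_nonneg_of_critPoly_nonneg hlam.2 hr.1 hr₁ hf
end

section
/- Let 0 < p ≤ 2, let a ∈ (0,1), and let φ_a(z) = (a − z)/(1 − a z) = a − (1 − a²) Σ_{k=1}^∞ a^{k−1} z^k for z in the unit disk D. Then for r ∈ (0,1) the quantity a^p + Σ_{k=1}^∞ (1 − a²) a^{k−1} r^k + (1/(1+a) + r/(1−r)) · Σ_{k=1}^∞ (1 − a²)² a^{2(k−1)} r^{2k} equals 1 − a + a^p + (1 − a)[(2 + a)r − 1]/(1 − r), and this is strictly greater than 1 if and only if r > (1 − a^p)/(2 − a² − a^p). -/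
open Metric

/-!
All three series are geometric, in `a z`, `a r` and `a² r²` respectively, so the identity is an
identity of rational functions of `a` and `r`. Subtracting `1` leaves
`(r (2 − a² − a^p) − (1 − a^p)) / (1 − r)`, and both `1 − r` and `2 − a² − a^p` are positive
because `a^p < 1`.
-/

theorem hasSum_pow_mul_pow_succ {𝕜 : Type*} [NormedField 𝕜] [CompleteSpace 𝕜] {a z : 𝕜}
    (h : ‖a * z‖ < 1) : HasSum (fun k : ℕ => a ^ k * z ^ (k + 1)) (z / (1 - a * z)) := by
  have hterm : (fun k : ℕ => a ^ k * z ^ (k + 1)) = fun k => z * (a * z) ^ k := by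
    funext k
    ring
  rw [hterm, div_eq_mul_inv]
  exact (hasSum_geometric_of_norm_lt_one h).mul_left z

theorem hasSum_diskAutomorphism_sub {a z : ℂ} (h : ‖a * z‖ < 1) :
    HasSum (fun k : ℕ => -((1 - a ^ 2) * a ^ k * z ^ (k + 1))) ((a - z) / (1 - a * z) - a) := by
  have hne : 1 - a * z ≠ 0 := by
    intro h0
    rw [← sub_eq_zero.mp h0, norm_one] at h
    exact h.false
  have hsum := (hasSum_pow_mul_pow_succ h).mul_left (-(1 - a ^ 2))
  have hval : (a - z) / (1 - a * z) - a = -(1 - a ^ 2) * (z / (1 - a * z)) := by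
    field_simp
    ring
  simpa only [hval, mul_assoc, neg_mul] using hsum

theorem sharpness_sum_eq {a q r : ℝ} (ha : 0 < a) (hr : r < 1) (har : |a * r| < 1) :
    q + (1 - a ^ 2) * (r / (1 - a * r)) +
        (1 / (1 + a) + r / (1 - r)) * ((1 - a ^ 2) ^ 2 * (r ^ 2 / (1 - a ^ 2 * r ^ 2)))
      = 1 - a + q + (1 - a) * ((2 + a) * r - 1) / (1 - r) := by
  obtain ⟨har₁, har₂⟩ := abs_lt.1 har
  have h1 : 1 + a ≠ 0 := by positivity
  have h2 : 1 - r ≠ 0 := by linarith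
  have h3 : 1 - a * r ≠ 0 := by linarith
  have h4 : 1 - a ^ 2 * r ^ 2 ≠ 0 := by nlinarith
  field_simp
  ring

theorem one_lt_sharpness_bound_iff {a q r : ℝ} (hr : r < 1) (hden : 0 < 2 - a ^ 2 - q) :
    1 < 1 - a + q + (1 - a) * ((2 + a) * r - 1) / (1 - r) ↔ (1 - q) / (2 - a ^ 2 - q) < r := by
  have hr' : 0 < 1 - r := sub_pos.2 hr
  have hsub : 1 - a + q + (1 - a) * ((2 + a) * r - 1) / (1 - r) - 1
      = (r * (2 - a ^ 2 - q) - (1 - q)) / (1 - r) := by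
    field_simp
    ring
  rw [← sub_pos, hsub, div_pos_iff_of_pos_right hr', sub_pos, div_lt_iff₀ hden]

theorem sharpness_example_general
    (p a : ℝ) (hp0 : 0 < p) (ha : a ∈ Set.Ioo (0 : ℝ) 1)
    (r : ℝ) (hr : r ∈ Set.Ioo (0 : ℝ) 1) :
    (∀ z ∈ ball (0 : ℂ) 1,
      HasSum (fun k : ℕ => -((1 - (a : ℂ) ^ 2) * (a : ℂ) ^ k * z ^ (k + 1)))
        (((a : ℂ) - z) / (1 - (a : ℂ) * z) - (a : ℂ))) ∧
    a ^ p + (∑' k : ℕ, (1 - a ^ 2) * a ^ k * r ^ (k + 1)) +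
        (1 / (1 + a) + r / (1 - r)) *
          (∑' k : ℕ, (1 - a ^ 2) ^ 2 * a ^ (2 * k) * r ^ (2 * (k + 1)))
      = 1 - a + a ^ p + (1 - a) * ((2 + a) * r - 1) / (1 - r) ∧
    (1 < 1 - a + a ^ p + (1 - a) * ((2 + a) * r - 1) / (1 - r) ↔
      (1 - a ^ p) / (2 - a ^ 2 - a ^ p) < r) := by
  obtain ⟨ha0, ha1⟩ := ha
  obtain ⟨hr0, hr1⟩ := hr
  have har : |a * r| < 1 := by
    rw [abs_of_pos (mul_pos ha0 hr0)]
    nlinarith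
  have hsq : |a ^ 2 * r ^ 2| < 1 := by
    rw [← mul_pow, abs_pow]
    exact pow_lt_one₀ (abs_nonneg _) har two_ne_zero
  refine ⟨fun z hz => hasSum_diskAutomorphism_sub ?_, ?_, ?_⟩
  · rw [norm_mul, Complex.norm_real, Real.norm_of_nonneg ha0.le]
    rw [mem_ball_zero_iff] at hz
    nlinarith [norm_nonneg z]
  · have hsum₁ := (hasSum_pow_mul_pow_succ (𝕜 := ℝ) har).mul_left (1 - a ^ 2)
    have hsum₂ := (hasSum_pow_mul_pow_succ (𝕜 := ℝ) hsq).mul_left ((1 - a ^ 2) ^ 2)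
    simp only [← mul_assoc, ← pow_mul] at hsum₁ hsum₂
    rw [hsum₁.tsum_eq, hsum₂.tsum_eq]
    exact sharpness_sum_eq ha0 hr1 har
  · apply one_lt_sharpness_bound_iff hr1
    nlinarith [Real.rpow_lt_one ha0.le ha1 hp0]

/-- **Sharpness example.** For `0 < p ≤ 2`, `a ∈ (0,1)` and the disk automorphism
`φ_a(z) = (a − z)/(1 − a z) = a − (1 − a²) Σ_{k≥1} a^{k−1} z^k`, for every `r ∈ (0,1)`
the quantity `a^p + Σ_{k≥1} (1−a²) a^{k−1} r^k + (1/(1+a) + r/(1−r)) Σ_{k≥1} (1−a²)² a^{2(k−1)} r^{2k}`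
equals `1 − a + a^p + (1−a)[(2+a)r − 1]/(1−r)`, and this is `> 1` iff
`r > (1 − a^p)/(2 − a² − a^p)`. -/
theorem sharpness_example
    (p a : ℝ) (hp0 : 0 < p) (hp2 : p ≤ 2) (ha : a ∈ Set.Ioo (0 : ℝ) 1)
    (r : ℝ) (hr : r ∈ Set.Ioo (0 : ℝ) 1) :
    (∀ z ∈ ball (0 : ℂ) 1,
      HasSum (fun k : ℕ => -((1 - (a : ℂ) ^ 2) * (a : ℂ) ^ k * z ^ (k + 1)))
        (((a : ℂ) - z) / (1 - (a : ℂ) * z) - (a : ℂ))) ∧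
    a ^ p + (∑' k : ℕ, (1 - a ^ 2) * a ^ k * r ^ (k + 1)) +
        (1 / (1 + a) + r / (1 - r)) *
          (∑' k : ℕ, (1 - a ^ 2) ^ 2 * a ^ (2 * k) * r ^ (2 * (k + 1)))
      = 1 - a + a ^ p + (1 - a) * ((2 + a) * r - 1) / (1 - r) ∧
    (1 < 1 - a + a ^ p + (1 - a) * ((2 + a) * r - 1) / (1 - r) ↔
      (1 - a ^ p) / (2 - a ^ 2 - a ^ p) < r) :=
  sharpness_example_general p a hp0 ha r hr
end
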